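/- arXiv:1710.02466 — 6 statements merged into one kernel-verified Lean document; each statement's English description precedes it below -/
import Mathlib

section
/- There exists ζ > 0 such that for every integer N ≥ 8, P[there exists k ≥ 1 with S_k = N] ≥ ζ. -/
/-!
On the almost sure event that every step is positive, the walk `S` is strictly increasing, so the
renewal mass `∑ₖ P[S_k = s]` is at most `1`. To pass level `M = N - 8` the walk either visits the
window `[M - J, M]` or jumps over it from some `s < M - J`; by independence the latter has
probability at most `∑ₛ P[u > M - s] ≤ ∑_{m > J} P[u > m]`, which is `≤ 1/2` for large `J`
because the tails of `u` are summable. Hence the window carries renewal mass `≥ 1/2`, some `s` in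
it has mass `≥ 1/(2(J+1))`, and from there a single step of size `N - s ∈ [8, J + 8]` hits `N`
with probability at least `min_{[8, J+8]} q > 0`.
-/

open MeasureTheory ProbabilityTheory Filter Finset
open scoped ENNReal NNReal

namespace Renewal

variable {Ω : Type*} {u : ℕ → Ω → ℕ}

def partialSum (u : ℕ → Ω → ℕ) (k : ℕ) (x : Ω) : ℕ := ∑ i ∈ range k, u i x

@[simp]
lemma partialSum_zero (x : Ω) : partialSum u 0 x = 0 := rfl

lemma partialSum_succ (k : ℕ) (x : Ω) : partialSum u (k + 1) x = partialSum u k x + u k x :=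
  sum_range_succ _ _

lemma strictMono_partialSum {x : Ω} (hx : ∀ i, 0 < u i x) :
    StrictMono fun k => partialSum u k x :=
  strictMono_nat_of_lt_succ fun k => by
    rw [partialSum_succ]
    exact Nat.lt_add_of_pos_right (hx k)

lemma exists_partialSum_le_lt_succ {x : Ω} (hx : ∀ i, 0 < u i x) (M : ℕ) :
    ∃ k, partialSum u k x ≤ M ∧ M < partialSum u (k + 1) x := by
  classical
  have hex : ∃ k, M < partialSum u (k + 1) x :=
    ⟨M, Nat.lt_of_lt_of_le M.lt_succ_self ((strictMono_partialSum hx).id_le _)⟩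
  refine ⟨Nat.find hex, ?_, Nat.find_spec hex⟩
  cases hk : Nat.find hex with
  | zero => simp
  | succ j => exact not_lt.1 (Nat.find_min hex (hk ▸ j.lt_succ_self))

variable [MeasurableSpace Ω] {P : Measure Ω}

noncomputable def renewalMass (P : Measure Ω) (u : ℕ → Ω → ℕ) (s : ℕ) : ℝ≥0∞ :=
  ∑' k, P {x | partialSum u k x = s}

lemma measurable_partialSum (hmeas : ∀ i, Measurable (u i)) (k : ℕ) :
    Measurable (partialSum u k) :=
  Finset.measurable_sum _ fun i _ => hmeas i

lemma measure_partialSum_eq_inter_step (hmeas : ∀ i, Measurable (u i)) (hindep : iIndepFun u P)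
    (k s : ℕ) (t : Set ℕ) :
    P ({x | partialSum u k x = s} ∩ u k ⁻¹' t) = P {x | partialSum u k x = s} * P (u k ⁻¹' t) := by
  have hset : {x | partialSum u k x = s} = (∑ j ∈ range k, u j) ⁻¹' {s} := by
    ext x
    simp [partialSum]
  rw [hset]
  exact (hindep.indepFun_sum_range_succ hmeas k).measure_inter_preimage_eq_mul _ _
    (measurableSet_singleton s) .of_discrete

lemma aedisjoint_partialSum_eq (hpos : ∀ᵐ x ∂P, ∀ i, 0 < u i x) (s : ℕ) :
    Pairwise (Function.onFun (AEDisjoint P) fun k => {x | partialSum u k x = s}) := by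
  intro k l hkl
  refine measure_mono_null ?_ (ae_iff.1 hpos)
  rintro x ⟨hk, hl⟩ hx
  exact hkl ((strictMono_partialSum hx).injective (hk.trans hl.symm))

lemma renewalMass_le_one [IsProbabilityMeasure P] (hmeas : ∀ i, Measurable (u i))
    (hpos : ∀ᵐ x ∂P, ∀ i, 0 < u i x) (s : ℕ) : renewalMass P u s ≤ 1 := by
  rw [renewalMass, ← measure_iUnion₀ (aedisjoint_partialSum_eq hpos s) fun k =>
    (measurable_partialSum hmeas k (measurableSet_singleton s)).nullMeasurableSet]
  exact prob_le_one

lemma renewalMass_mul_le_measure_hit (hmeas : ∀ i, Measurable (u i)) (hindep : iIndepFun u P)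
    (hpos : ∀ᵐ x ∂P, ∀ i, 0 < u i x) {s n : ℕ} {a : ℝ≥0∞} (hlaw : ∀ i, P {x | u i x = n} = a) :
    renewalMass P u s * a ≤ P {x | ∃ k, 1 ≤ k ∧ partialSum u k x = s + n} := by
  calc renewalMass P u s * a
      = ∑' k, P ({x | partialSum u k x = s} ∩ u k ⁻¹' {n}) := by
        rw [renewalMass, ← ENNReal.tsum_mul_right]
        congr 1 with k
        rw [measure_partialSum_eq_inter_step hmeas hindep, ← hlaw k]
        rfl
    _ = P (⋃ k, {x | partialSum u k x = s} ∩ u k ⁻¹' {n}) :=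
        (measure_iUnion₀ (fun k l hkl => (aedisjoint_partialSum_eq hpos s hkl).mono
            (fun _ h => h.1) fun _ h => h.1) fun k =>
          ((measurable_partialSum hmeas k (measurableSet_singleton s)).inter
            (hmeas k (measurableSet_singleton n))).nullMeasurableSet).symm
    _ ≤ _ := by
        refine measure_mono (Set.iUnion_subset fun k x ⟨hk, hu⟩ => ⟨k + 1, Nat.le_add_left 1 k, ?_⟩)
        rw [partialSum_succ, show partialSum u k x = s from hk, show u k x = n from hu]

lemma measure_exists_partialSum_mem_le (W : Finset ℕ) :
    P {x | ∃ k, partialSum u k x ∈ W} ≤ ∑ s ∈ W, renewalMass P u s := by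
  calc P {x | ∃ k, partialSum u k x ∈ W}
      = P (⋃ s ∈ W, ⋃ k, {x | partialSum u k x = s}) := by
        congr 1
        ext x
        simp only [Set.mem_ofPred_eq, Set.mem_iUnion, exists_prop]
        exact ⟨fun ⟨k, hk⟩ => ⟨_, hk, k, rfl⟩, fun ⟨_, hs, k, hk⟩ => ⟨k, hk ▸ hs⟩⟩
    _ ≤ ∑ s ∈ W, P (⋃ k, {x | partialSum u k x = s}) := measure_biUnion_finset_le _ _
    _ ≤ ∑ s ∈ W, renewalMass P u s := sum_le_sum fun s _ => measure_iUnion_le _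

lemma measure_overshoot_le [IsProbabilityMeasure P] (hmeas : ∀ i, Measurable (u i))
    (hindep : iIndepFun u P) (hpos : ∀ᵐ x ∂P, ∀ i, 0 < u i x) {T : ℕ → ℝ≥0∞}
    (hT : ∀ i m, P {x | m < u i x} ≤ T m) (a M : ℕ) :
    P {x | ∃ k, partialSum u k x < a ∧ M - partialSum u k x < u k x} ≤
      ∑ s ∈ range a, T (M - s) := by
  calc P {x | ∃ k, partialSum u k x < a ∧ M - partialSum u k x < u k x}
      ≤ P (⋃ k, ⋃ s ∈ range a, {x | partialSum u k x = s} ∩ u k ⁻¹' {n | M - s < n}) := by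
        refine measure_mono fun x ⟨k, hlt, hjump⟩ => ?_
        simp only [Set.mem_iUnion]
        exact ⟨k, _, mem_range.2 hlt, rfl, hjump⟩
    _ ≤ ∑' k, ∑ s ∈ range a, P ({x | partialSum u k x = s} ∩ u k ⁻¹' {n | M - s < n}) :=
        (measure_iUnion_le _).trans (ENNReal.tsum_le_tsum fun k => measure_biUnion_finset_le _ _)
    _ ≤ ∑' k, ∑ s ∈ range a, P {x | partialSum u k x = s} * T (M - s) := by
        gcongr with k s
        rw [measure_partialSum_eq_inter_step hmeas hindep]
        gcongr
        exact hT k _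
    _ = ∑ s ∈ range a, renewalMass P u s * T (M - s) := by
        rw [Summable.tsum_finsetSum fun s _ => ENNReal.summable]
        simp only [renewalMass, ENNReal.tsum_mul_right]
    _ ≤ ∑ s ∈ range a, T (M - s) :=
        sum_le_sum fun s _ => mul_le_of_le_one_left' (renewalMass_le_one hmeas hpos s)

lemma one_le_measure_window_add_overshoot [IsProbabilityMeasure P]
    (hpos : ∀ᵐ x ∂P, ∀ i, 0 < u i x) (a M : ℕ) :
    1 ≤ P {x | ∃ k, partialSum u k x ∈ Icc a M} +
      P {x | ∃ k, partialSum u k x < a ∧ M - partialSum u k x < u k x} := by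
  rw [← measure_univ (μ := P)]
  refine (measure_mono_ae ?_).trans (measure_union_le _ _)
  filter_upwards [hpos] with x hx _
  obtain ⟨k, hle, hlt⟩ := exists_partialSum_le_lt_succ hx M
  rw [partialSum_succ] at hlt
  by_cases ha : a ≤ partialSum u k x
  · exact Or.inl ⟨k, mem_Icc.2 ⟨ha, hle⟩⟩
  · exact Or.inr ⟨k, by omega, by omega⟩

lemma sum_range_sub_le_tsum_add (T : ℕ → ℝ≥0∞) (M J : ℕ) :
    ∑ s ∈ range (M - J), T (M - s) ≤ ∑' i, T (i + (J + 1)) := by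
  rw [← sum_range_reflect]
  refine le_of_eq_of_le (sum_congr rfl fun j hj => ?_) (ENNReal.sum_le_tsum _)
  rw [mem_range] at hj
  congr 1
  omega

lemma exists_tsum_tail_le_half {T : ℕ → ℝ≥0∞} (hT : ∑' m, T m ≠ ∞) :
    ∃ J : ℕ, ∑' i, T (i + (J + 1)) ≤ 2⁻¹ :=
  ((ENNReal.tendsto_sum_nat_add T hT).eventually
    (eventually_le_nhds (ENNReal.inv_pos.2 ENNReal.ofNat_ne_top))).exists_forall_of_atTop.imp
      fun _ hJ => hJ _ (Nat.le_succ _)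

lemma card_Icc_sub_le (M J : ℕ) : #(Icc (M - J) M) ≤ J + 1 := by
  rw [Nat.card_Icc]
  omega

theorem exists_window_le_renewalMass [IsProbabilityMeasure P] (hmeas : ∀ i, Measurable (u i))
    (hindep : iIndepFun u P) (hpos : ∀ᵐ x ∂P, ∀ i, 0 < u i x) {T : ℕ → ℝ≥0∞}
    (hT : ∀ i m, P {x | m < u i x} ≤ T m) (hTsum : ∑' m, T m ≠ ∞) :
    ∃ J : ℕ, ∃ ε : ℝ≥0, 0 < ε ∧ ∀ M, ∃ s ∈ Icc (M - J) M, (ε : ℝ≥0∞) ≤ renewalMass P u s := by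
  obtain ⟨J, hJ⟩ := exists_tsum_tail_le_half hTsum
  set ε : ℝ≥0 := (2 * (J + 1))⁻¹
  refine ⟨J, ε, by positivity, fun M => ENNReal.exists_le_of_sum_le ⟨M, by simp⟩ ?_⟩
  have hε : ((J + 1 : ℕ) : ℝ≥0∞) * ε = 2⁻¹ := by
    have h : ((J + 1 : ℕ) : ℝ≥0) * ε = 2⁻¹ := by
      simp only [ε]
      push_cast
      field_simp
    rw [← ENNReal.coe_natCast, ← ENNReal.coe_mul, h, ENNReal.coe_inv two_ne_zero, ENNReal.coe_ofNat]
  have hwindow : 2⁻¹ ≤ ∑ s ∈ Icc (M - J) M, renewalMass P u s := by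
    have h := (one_le_measure_window_add_overshoot hpos (M - J) M).trans
      (add_le_add (measure_exists_partialSum_mem_le _)
        ((measure_overshoot_le hmeas hindep hpos hT _ M).trans
          ((sum_range_sub_le_tsum_add T M J).trans hJ)))
    rwa [← ENNReal.inv_two_add_inv_two, ENNReal.add_le_add_iff_right (by simp)] at h
  calc ∑ _s ∈ Icc (M - J) M, (ε : ℝ≥0∞)
      = #(Icc (M - J) M) * ε := by rw [sum_const, nsmul_eq_mul]
    _ ≤ ((J + 1 : ℕ) : ℝ≥0∞) * ε := by
        gcongr
        exact_mod_cast card_Icc_sub_le M J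
    _ ≤ _ := hε.le.trans hwindow

lemma ofReal_le_mul_pow_of_le_mul_exp {q : ℕ → ℝ} {c ω : ℝ}
    (hqexp : ∀ n : ℕ, q n ≤ c * Real.exp (-ω * n)) (n : ℕ) :
    ENNReal.ofReal (q n) ≤ ENNReal.ofReal c * ENNReal.ofReal (Real.exp (-ω)) ^ n := by
  rw [← ENNReal.ofReal_pow (Real.exp_pos _).le, ← Real.exp_nat_mul, ← ENNReal.ofReal_mul'
    (Real.exp_pos _).le, mul_comm (n : ℝ)]
  exact ENNReal.ofReal_le_ofReal (hqexp n)

lemma measure_lt_le_of_le_mul_exp {v : Ω → ℕ} {q : ℕ → ℝ} {c ω : ℝ}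
    (hlaw : ∀ n, P {x | v x = n} = ENNReal.ofReal (q n))
    (hqexp : ∀ n : ℕ, q n ≤ c * Real.exp (-ω * n)) (m : ℕ) :
    P {x | m < v x} ≤ ENNReal.ofReal c * (1 - ENNReal.ofReal (Real.exp (-ω)))⁻¹ *
      ENNReal.ofReal (Real.exp (-ω)) ^ m := by
  set ρ := ENNReal.ofReal (Real.exp (-ω))
  calc P {x | m < v x} ≤ P (⋃ n, {x | v x = m + n}) :=
        measure_mono fun x hx => Set.mem_iUnion.2
          ⟨v x - m, by simp only [Set.mem_ofPred_eq] at hx ⊢; omega⟩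
    _ ≤ ∑' n, ENNReal.ofReal c * ρ ^ (m + n) :=
        (measure_iUnion_le _).trans (ENNReal.tsum_le_tsum fun n =>
          (hlaw _).le.trans (ofReal_le_mul_pow_of_le_mul_exp hqexp _))
    _ = ENNReal.ofReal c * (1 - ρ)⁻¹ * ρ ^ m := by
        simp only [pow_add, ← mul_assoc, ENNReal.tsum_mul_left, ENNReal.tsum_geometric]
        ring

lemma tsum_mul_geometric_ne_top {C ρ : ℝ≥0∞} (hC : C ≠ ∞) (hρ : ρ < 1) :
    ∑' m, C * ρ ^ m ≠ ∞ := by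
  rw [ENNReal.tsum_mul_left, ENNReal.tsum_geometric]
  exact ENNReal.mul_ne_top hC (ENNReal.inv_ne_top.2 (tsub_pos_of_lt hρ).ne')

end Renewal

open Renewal

theorem renewal_uniform_lower_bound_general
    {Ω : Type*} [MeasurableSpace Ω] (P : Measure Ω) [IsProbabilityMeasure P]
    (q : ℕ → ℝ)
    (hqlow : ∀ n < 8, q n = 0) (hqpos : ∀ n, 8 ≤ n → 0 < q n)
    (c ω : ℝ) (hω : 0 < ω)
    (hqexp : ∀ n : ℕ, q n ≤ c * Real.exp (-ω * n))
    (u : ℕ → Ω → ℕ) (hmeas : ∀ i, Measurable (u i))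
    (hindep : iIndepFun u P)
    (hlaw : ∀ i n, P {x | u i x = n} = ENNReal.ofReal (q n)) :
    ∃ ζ > (0 : ℝ), ∀ N : ℕ, 8 ≤ N →
      ζ ≤ (P {x | ∃ k, 1 ≤ k ∧ (∑ i ∈ Finset.range k, u i x) = N}).toReal := by
  have hpos : ∀ᵐ x ∂P, ∀ i, 0 < u i x := ae_all_iff.2 fun i => ae_iff.2 <| by
    simpa [Nat.pos_iff_ne_zero, hlaw] using (hqlow 0 (by norm_num)).le
  have hρ : ENNReal.ofReal (Real.exp (-ω)) < 1 :=
    ENNReal.ofReal_lt_one.2 (Real.exp_lt_one_iff.2 (neg_lt_zero.2 hω))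
  obtain ⟨J, ε, hε, hwindow⟩ := exists_window_le_renewalMass hmeas hindep hpos
    (fun i => measure_lt_le_of_le_mul_exp (hlaw i) hqexp)
    (tsum_mul_geometric_ne_top (ENNReal.mul_ne_top ENNReal.ofReal_ne_top
      (ENNReal.inv_ne_top.2 (tsub_pos_of_lt hρ).ne')) hρ)
  obtain ⟨n₀, hn₀, hmin⟩ := (Icc 8 (J + 8)).exists_min_image q ⟨8, by simp⟩
  refine ⟨ε * q n₀, mul_pos hε (hqpos n₀ (mem_Icc.1 hn₀).1), fun N hN => ?_⟩
  obtain ⟨s, hs, hεs⟩ := hwindow (N - 8)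
  rw [mem_Icc] at hs
  rw [← ENNReal.ofReal_le_iff_le_toReal (measure_ne_top _ _), ENNReal.ofReal_mul ε.coe_nonneg,
    ENNReal.ofReal_coe_nnreal]
  calc (ε : ℝ≥0∞) * ENNReal.ofReal (q n₀)
      ≤ renewalMass P u s * ENNReal.ofReal (q (N - s)) :=
        mul_le_mul' hεs (ENNReal.ofReal_le_ofReal (hmin _ (mem_Icc.2 (by omega))))
    _ ≤ P {x | ∃ k, 1 ≤ k ∧ partialSum u k x = s + (N - s)} :=
        renewalMass_mul_le_measure_hit hmeas hindep hpos fun i => hlaw i _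
    _ = _ := by rw [Nat.add_sub_cancel' (by omega)]; rfl

/-- Uniform lower bound on renewal probabilities:
there is `ζ > 0` such that `P[∃ k ≥ 1, S_k = N] ≥ ζ` for every `N ≥ 8`. -/
theorem renewal_uniform_lower_bound
    {Ω : Type*} [MeasurableSpace Ω] (P : Measure Ω) [IsProbabilityMeasure P]
    (q : ℕ → ℝ) (hq0 : ∀ n, 0 ≤ q n) (hq1 : HasSum q 1)
    (hqlow : ∀ n < 8, q n = 0) (hqpos : ∀ n, 8 ≤ n → 0 < q n)
    (c ω : ℝ) (hc : 0 < c) (hω : 0 < ω)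
    (hqexp : ∀ n : ℕ, q n ≤ c * Real.exp (-ω * n))
    (u : ℕ → Ω → ℕ) (hmeas : ∀ i, Measurable (u i))
    (hindep : iIndepFun u P)
    (hlaw : ∀ i n, P {x | u i x = n} = ENNReal.ofReal (q n)) :
    ∃ ζ > (0 : ℝ), ∀ N : ℕ, 8 ≤ N →
      ζ ≤ (P {x | ∃ k, 1 ≤ k ∧ (∑ i ∈ Finset.range k, u i x) = N}).toReal :=
  renewal_uniform_lower_bound_general P q hqlow hqpos c ω hω hqexp u hmeas hindep hlaw
end

section
/- Suppose there are constants c, δ > 0 with p(z, z') ≤ c e^{−δ z'} for every z ≠ 0 and every z', and a constant ζ ∈ (0,1) with p(z, 0) ≥ ζ for every z ≠ 0. Then there exist constants C > 0 and a > 0 such that for every starting state z_0 ≠ 0 and every t > 0, P_{z_0}[∑_{n=1}^{∞} Z_n > t] ≤ C e^{−a t} (the sum being taken in [0, ∞]; since 0 is absorbing this sum equals the total value accumulated before the chain hits 0). -/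
/-!
Exponential tilting. For `θ > 0` put `g_θ(z, z') = p(z, z') e^{θ z'}`. Chernoff's bound, applied
path by path to the finite-dimensional distributions, gives
`P_{z₀}[Z₁ + ⋯ + Z_N > t] ≤ e^{-θ t} (g_θ^N 1)(z₀)`.
Since `e^x ≤ 1 + x e^x` and `p(z, ·)` decays exponentially, a row of `g_θ` at `z ≠ 0` puts mass at
most `1 - ζ + O(θ)` off `0`, hence at most `r = 1 - ζ/2` for small `θ`; as `0` is absorbing, the
iterates `g_θ^N 1` then stay below `1 / (1 - r) = 2/ζ`. Letting `N → ∞` gives `C = 2/ζ`, `a = θ`.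
-/

open MeasureTheory
open scoped ENNReal

section PathMass

variable {α : Type*} (g : α → α → ℝ≥0∞)

noncomputable def pathWeight {N : ℕ} (v : Fin (N + 1) → α) : ℝ≥0∞ :=
  ∏ i : Fin N, g (v i.castSucc) (v i.succ)

noncomputable def pathMass : ℕ → α → ℝ≥0∞
  | 0, _ => 1
  | N + 1, z => ∑' z', g z z' * pathMass N z'

theorem pathWeight_cons {N : ℕ} (z : α) (v : Fin (N + 1) → α) :
    pathWeight g (Fin.cons z v : Fin (N + 2) → α) = g z (v 0) * pathWeight g v := by
  simp only [pathWeight, Fin.prod_univ_succ, ← Fin.succ_castSucc, Fin.cons_succ, Fin.cons_zero,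
    Fin.castSucc_zero]

theorem tsum_pathWeight_cons (N : ℕ) (z : α) :
    ∑' v : Fin N → α, pathWeight g (Fin.cons z v : Fin (N + 1) → α) = pathMass g N z := by
  induction N generalizing z with
  | zero => simp [pathWeight, pathMass]
  | succ N ih =>
    rw [← (Fin.consEquiv fun _ : Fin (N + 1) => α).tsum_eq, ENNReal.tsum_prod', pathMass]
    refine tsum_congr fun z' => ?_
    simp only [Fin.consEquiv, Equiv.coe_fn_mk, pathWeight_cons, Fin.cons_zero,
      ENNReal.tsum_mul_left, ih]

theorem tsum_ite_pathWeight [DecidableEq α] (N : ℕ) (z : α) :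
    ∑' v : Fin (N + 1) → α, (if v 0 = z then 1 else 0) * pathWeight g v = pathMass g N z := by
  rw [← (Fin.consEquiv fun _ : Fin (N + 1) => α).tsum_eq, ENNReal.tsum_prod',
    tsum_eq_single z fun z' hz' => by simp [hz'], ← tsum_pathWeight_cons]
  simp [Fin.consEquiv]

theorem pathMass_le {g : ℕ → ℕ → ℝ≥0∞} {r B : ℝ≥0∞} (hto0 : ∀ z, g z 0 ≤ 1)
    (habs : ∀ n, g 0 (n + 1) = 0) (hrow : ∀ z ≠ 0, ∑' n, g z (n + 1) ≤ r)
    (hB : 1 + r * B ≤ B) (N z : ℕ) : pathMass g N z ≤ B := by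
  have hB1 : 1 ≤ B := le_of_add_le_left hB
  suffices ∀ N, pathMass g N 0 ≤ 1 ∧ ∀ z, pathMass g N z ≤ B from (this N).2 z
  intro N
  induction N with
  | zero => exact ⟨le_rfl, fun _ => hB1⟩
  | succ N ih =>
    have hstep : ∀ z, pathMass g (N + 1) z ≤ 1 + (∑' n, g z (n + 1)) * B := fun z => by
      rw [pathMass, tsum_eq_zero_add' ENNReal.summable, ← ENNReal.tsum_mul_right]
      gcongr
      · exact mul_le_one' (hto0 z) ih.1
      · exact ih.2 _
    refine ⟨by simpa [habs] using hstep 0, fun z => ?_⟩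
    rcases eq_or_ne z 0 with rfl | hz
    · exact (by simpa [habs] using hstep 0 : _ ≤ (1 : ℝ≥0∞)).trans hB1
    · exact (hstep z).trans (le_trans (by gcongr; exact hrow z hz) hB)

end PathMass

theorem Real.exp_le_one_add_mul_exp (x : ℝ) : Real.exp x ≤ 1 + x * Real.exp x := by
  have h := Real.add_one_le_exp (-x)
  have h' : Real.exp (-x) * Real.exp x = 1 := by
    rw [← Real.exp_add, neg_add_cancel, Real.exp_zero]
  nlinarith [Real.exp_pos x]

noncomputable def expTilt (p : ℕ → ℕ → ℝ) (θ : ℝ) (z z' : ℕ) : ℝ≥0∞ :=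
  ENNReal.ofReal (p z z' * Real.exp (θ * z'))

theorem mul_exp_le_add_mul_exp_neg {q c δ θ x : ℝ} (hq0 : 0 ≤ q)
    (hq : q ≤ c * Real.exp (-δ * x)) (hc : 0 ≤ c) (hθ0 : 0 ≤ θ) (hθ : θ ≤ δ / 2) (hx : 0 ≤ x) :
    q * Real.exp (θ * x) ≤ q + θ * c * (x * Real.exp (-(δ / 2) * x)) := by
  have hθx : 0 ≤ θ * x * Real.exp (θ * x) := by positivity
  calc q * Real.exp (θ * x) ≤ q * (1 + θ * x * Real.exp (θ * x)) :=
        mul_le_mul_of_nonneg_left (Real.exp_le_one_add_mul_exp _) hq0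
    _ ≤ q + c * Real.exp (-δ * x) * (θ * x * Real.exp (θ * x)) := by
        nlinarith [mul_le_mul_of_nonneg_right hq hθx]
    _ = q + θ * c * (x * Real.exp ((θ - δ) * x)) := by
        rw [sub_mul, sub_eq_add_neg, Real.exp_add, ← neg_mul]; ring
    _ ≤ q + θ * c * (x * Real.exp (-(δ / 2) * x)) := by
        gcongr
        linarith

section TiltedRow

variable {p : ℕ → ℕ → ℝ} (hp0 : ∀ z z', 0 ≤ p z z') (hp1 : ∀ z, HasSum (p z) 1)
  {c δ : ℝ} (hc : 0 < c) (hδ : 0 < δ)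
  (hexp : ∀ z z', z ≠ 0 → p z z' ≤ c * Real.exp (-δ * z'))
  {ζ : ℝ} (hζp : ∀ z, z ≠ 0 → ζ ≤ p z 0)
include hp0 hp1 hc hδ hexp hζp

theorem tsum_expTilt_succ_le {θ : ℝ} (hθ0 : 0 ≤ θ) (hθ : θ ≤ δ / 2) {z : ℕ} (hz : z ≠ 0) :
    ∑' n, expTilt p θ z (n + 1) ≤
      ENNReal.ofReal (1 - ζ + θ * c * ∑' n : ℕ, n * Real.exp (-(δ / 2) * n)) := by
  set M := ∑' n : ℕ, (n : ℝ) * Real.exp (-(δ / 2) * n)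
  have hM : Summable fun n : ℕ => (n : ℝ) * Real.exp (-(δ / 2) * n) := by
    simpa using Real.summable_pow_mul_exp_neg_nat_mul 1 (half_pos hδ)
  have hM' : Summable fun n : ℕ => ((n + 1 : ℕ) : ℝ) * Real.exp (-(δ / 2) * (n + 1 : ℕ)) :=
    (summable_nat_add_iff 1).mpr hM
  have hoff0 : HasSum (fun n => p z (n + 1)) (1 - p z 0) := by
    simpa using (hasSum_nat_add_iff' 1).mpr (hp1 z)
  have hbound : ∀ n : ℕ, p z (n + 1) * Real.exp (θ * (n + 1 : ℕ)) ≤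
      p z (n + 1) + θ * c * (((n + 1 : ℕ) : ℝ) * Real.exp (-(δ / 2) * (n + 1 : ℕ))) :=
    fun n => mul_exp_le_add_mul_exp_neg (hp0 _ _) (hexp z _ hz) hc.le hθ0 hθ (Nat.cast_nonneg _)
  have hnonneg : ∀ n : ℕ, 0 ≤ p z (n + 1) * Real.exp (θ * (n + 1 : ℕ)) := fun n =>
    mul_nonneg (hp0 _ _) (Real.exp_pos _).le
  have hsum := (hoff0.summable.add (hM'.mul_left (θ * c))).of_nonneg_of_le hnonneg hbound
  have hM_eq : ∑' n : ℕ, ((n + 1 : ℕ) : ℝ) * Real.exp (-(δ / 2) * (n + 1 : ℕ)) = M := by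
    rw [show M = _ from hM.tsum_eq_zero_add]; simp
  unfold expTilt
  rw [← ENNReal.ofReal_tsum_of_nonneg hnonneg hsum]
  refine ENNReal.ofReal_le_ofReal ?_
  calc ∑' n, p z (n + 1) * Real.exp (θ * (n + 1 : ℕ))
      ≤ ∑' n : ℕ,
          (p z (n + 1) + θ * c * (((n + 1 : ℕ) : ℝ) * Real.exp (-(δ / 2) * (n + 1 : ℕ)))) :=
        hsum.tsum_le_tsum hbound (hoff0.summable.add (hM'.mul_left _))
    _ = 1 - p z 0 + θ * c * M := by
        rw [hoff0.summable.tsum_add (hM'.mul_left _), hoff0.tsum_eq, tsum_mul_left, hM_eq]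
    _ ≤ 1 - ζ + θ * c * M := by linarith [hζp z hz]

theorem exists_expTilt_row_le (hζ : 0 < ζ) :
    ∃ θ > 0, ∀ z ≠ 0, ∑' n, expTilt p θ z (n + 1) ≤ ENNReal.ofReal (1 - ζ / 2) := by
  set M := ∑' n : ℕ, (n : ℝ) * Real.exp (-(δ / 2) * n)
  have hM0 : 0 ≤ M := tsum_nonneg fun n => by positivity
  obtain ⟨b, hb0, hb⟩ := exists_pos_mul_lt (half_pos hζ) (c * M)
  refine ⟨min (δ / 2) b, lt_min (half_pos hδ) hb0, fun z hz => ?_⟩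
  refine (tsum_expTilt_succ_le hp0 hp1 hc hδ hexp hζp (lt_min (half_pos hδ) hb0).le
    (min_le_left _ _) hz).trans (ENNReal.ofReal_le_ofReal ?_)
  have : min (δ / 2) b * (c * M) ≤ b * (c * M) := by gcongr; exact min_le_right _ _
  nlinarith

end TiltedRow

theorem pathWeight_expTilt (p : ℕ → ℕ → ℝ) (hp0 : ∀ z z', 0 ≤ p z z') (θ : ℝ) {N : ℕ}
    (v : Fin (N + 1) → ℕ) :
    pathWeight (expTilt p θ) v = pathWeight (fun z z' => ENNReal.ofReal (p z z')) v *
      ENNReal.ofReal (Real.exp (θ * ∑ i : Fin N, (v i.succ : ℝ))) := by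
  simp only [pathWeight, expTilt, ENNReal.ofReal_mul (hp0 _ _), Finset.prod_mul_distrib,
    Finset.mul_sum, Real.exp_sum, ENNReal.ofReal_prod_of_nonneg fun _ _ => (Real.exp_pos _).le]

theorem pathWeight_le_of_lt_sum (p : ℕ → ℕ → ℝ) (hp0 : ∀ z z', 0 ≤ p z z') {θ t : ℝ}
    (hθ : 0 ≤ θ) {N : ℕ} (v : Fin (N + 1) → ℕ)
    (ht : ENNReal.ofReal t < ∑ i : Fin N, (v i.succ : ℝ≥0∞)) :
    pathWeight (fun z z' => ENNReal.ofReal (p z z')) v ≤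
      ENNReal.ofReal (Real.exp (-θ * t)) * pathWeight (expTilt p θ) v := by
  have hsum :
      ∑ i : Fin N, (v i.succ : ℝ≥0∞) = ENNReal.ofReal (∑ i : Fin N, (v i.succ : ℝ)) := by
    rw [ENNReal.ofReal_sum_of_nonneg fun _ _ => Nat.cast_nonneg _]
    simp
  rw [hsum, ENNReal.ofReal_lt_ofReal_iff'] at ht
  have hexp : 1 ≤ ENNReal.ofReal (Real.exp (-θ * t)) *
      ENNReal.ofReal (Real.exp (θ * ∑ i : Fin N, (v i.succ : ℝ))) := by
    rw [← ENNReal.ofReal_mul (Real.exp_pos _).le, ← Real.exp_add, ENNReal.one_le_ofReal]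
    exact Real.one_le_exp (by nlinarith [ht.1])
  rw [pathWeight_expTilt p hp0, mul_left_comm]
  exact le_mul_of_one_le_right zero_le hexp

theorem measure_lt_tsum_eq_iSup {Ω : Type*} [MeasurableSpace Ω] (μ : Measure Ω)
    (f : ℕ → Ω → ℝ≥0∞) (a : ℝ≥0∞) :
    μ {x | a < ∑' n, f n x} = ⨆ N, μ {x | a < ∑ n ∈ Finset.range N, f n x} := by
  have hunion : {x | a < ∑' n, f n x} = ⋃ N, {x | a < ∑ n ∈ Finset.range N, f n x} := by
    ext x
    simp only [Set.mem_ofPred_eq, Set.mem_iUnion, ENNReal.tsum_eq_iSup_nat, lt_iSup_iff]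
  rw [hunion]
  refine Monotone.measure_iUnion fun M N hMN x hx => ?_
  exact (show a < _ from hx).trans_le
    (Finset.sum_le_sum_of_subset (Finset.range_subset_range.mpr hMN))

section Cylinders

variable {Ω : Type*} [MeasurableSpace Ω] {μ : Measure Ω} {p : ℕ → ℕ → ℝ} {Z : ℕ → Ω → ℕ}
  {z0 : ℕ} (hμ : ∀ (n : ℕ) (w : ℕ → ℕ), μ {x | ∀ i ≤ n, Z i x = w i} =
    (if w 0 = z0 then 1 else 0) * ∏ i ∈ Finset.range n, ENNReal.ofReal (p (w i) (w (i + 1))))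
include hμ

theorem measure_cylinder {N : ℕ} (v : Fin (N + 1) → ℕ) :
    μ {x | ∀ i : Fin (N + 1), Z i x = v i} =
      (if v 0 = z0 then 1 else 0) * pathWeight (fun z z' => ENNReal.ofReal (p z z')) v := by
  set w : ℕ → ℕ := fun i => if h : i < N + 1 then v ⟨i, h⟩ else 0
  have hw : ∀ i : Fin (N + 1), v i = w i := fun i => by simp only [w, dif_pos i.isLt]
  have hcyl : {x | ∀ i : Fin (N + 1), Z i x = v i} = {x | ∀ i ≤ N, Z i x = w i} := by
    simp only [hw, Fin.forall_iff, Nat.lt_succ_iff]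
  rw [hcyl, hμ, Finset.prod_range, pathWeight]
  simp only [hw, Fin.val_zero, Fin.val_castSucc, Fin.val_succ]

theorem measure_partialSum_gt_le (hp0 : ∀ z z', 0 ≤ p z z') {θ : ℝ} (hθ : 0 ≤ θ) (t : ℝ)
    (N : ℕ) :
    μ {x | ENNReal.ofReal t < ∑ n ∈ Finset.range N, (Z (n + 1) x : ℝ≥0∞)} ≤
      ENNReal.ofReal (Real.exp (-θ * t)) * pathMass (expTilt p θ) N z0 := by
  classical
  set S := {v : Fin (N + 1) → ℕ | ENNReal.ofReal t < ∑ i : Fin N, (v i.succ : ℝ≥0∞)}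
  have hcover : {x | ENNReal.ofReal t < ∑ n ∈ Finset.range N, (Z (n + 1) x : ℝ≥0∞)} ⊆
      ⋃ v ∈ S, {x | ∀ i : Fin (N + 1), Z i x = v i} := fun x hx =>
    Set.mem_biUnion (x := fun i : Fin (N + 1) => Z i x)
      (by simpa [S, Finset.sum_range] using hx) fun _ => rfl
  calc _ ≤ ∑' v : S, μ {x | ∀ i : Fin (N + 1), Z i x = v.1 i} :=
        (measure_mono hcover).trans (measure_biUnion_le _ S.to_countable _)
    _ ≤ ∑' v : S, ENNReal.ofReal (Real.exp (-θ * t)) *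
          ((if v.1 0 = z0 then 1 else 0) * pathWeight (expTilt p θ) v.1) := by
        refine ENNReal.tsum_le_tsum fun v => ?_
        rw [measure_cylinder hμ, mul_left_comm]
        gcongr
        exact pathWeight_le_of_lt_sum p hp0 hθ v.1 v.2
    _ ≤ ∑' v : Fin (N + 1) → ℕ, ENNReal.ofReal (Real.exp (-θ * t)) *
          ((if v 0 = z0 then 1 else 0) * pathWeight (expTilt p θ) v) :=
        ENNReal.tsum_comp_le_tsum_of_injective Subtype.val_injective _
    _ = _ := by rw [ENNReal.tsum_mul_left, tsum_ite_pathWeight]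

end Cylinders

section Chain

variable {p : ℕ → ℕ → ℝ} (hp0 : ∀ z z', 0 ≤ p z z') (hp1 : ∀ z, HasSum (p z) 1)
include hp0 hp1

theorem expTilt_zero_right_le_one (θ : ℝ) (z : ℕ) : expTilt p θ z 0 ≤ 1 := by
  simpa [expTilt] using le_hasSum (hp1 z) 0 fun z' _ => hp0 z z'

theorem expTilt_zero_succ (habs : p 0 0 = 1) (θ : ℝ) (n : ℕ) : expTilt p θ 0 (n + 1) = 0 := by
  have h : HasSum (fun n => p 0 (n + 1)) 0 := by
    simpa [habs] using (hasSum_nat_add_iff' 1).mpr (hp1 0)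
  have hzero : p 0 (n + 1) = 0 :=
    congrFun ((hasSum_zero_iff_of_nonneg fun n => hp0 0 (n + 1)).mp h) n
  simp [expTilt, hzero]

end Chain

theorem markov_total_accumulation_exponential_tail_general
    {Ω : Type*} [MeasurableSpace Ω]
    (p : ℕ → ℕ → ℝ) (hp0 : ∀ z z', 0 ≤ p z z') (hp1 : ∀ z, HasSum (p z) 1)
    (habs : p 0 0 = 1)
    (Pz : ℕ → Measure Ω)
    (Z : ℕ → Ω → ℕ)
    (hfdd : ∀ (z0 n : ℕ) (w : ℕ → ℕ),
      Pz z0 {x | ∀ i ≤ n, Z i x = w i} =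
        (if w 0 = z0 then 1 else 0) *
          ∏ i ∈ Finset.range n, ENNReal.ofReal (p (w i) (w (i + 1))))
    (c δ : ℝ) (hc : 0 < c) (hδ : 0 < δ)
    (hexp : ∀ z z', z ≠ 0 → p z z' ≤ c * Real.exp (-δ * z'))
    (ζ : ℝ) (hζ : ζ ∈ Set.Ioo (0 : ℝ) 1) (hζp : ∀ z, z ≠ 0 → ζ ≤ p z 0) :
    ∃ C > (0 : ℝ), ∃ a > (0 : ℝ), ∀ z0 : ℕ, z0 ≠ 0 → ∀ t : ℝ, 0 < t →
      Pz z0 {x | ENNReal.ofReal t < ∑' n : ℕ, (Z (n + 1) x : ℝ≥0∞)}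
        ≤ ENNReal.ofReal (C * Real.exp (-a * t)) := by
  obtain ⟨θ, hθ, hrow⟩ := exists_expTilt_row_le hp0 hp1 hc hδ hexp hζp hζ.1
  have hB :
      1 + ENNReal.ofReal (1 - ζ / 2) * ENNReal.ofReal (2 / ζ) ≤ ENNReal.ofReal (2 / ζ) := by
    rw [← ENNReal.ofReal_mul (by linarith [hζ.2]), ← ENNReal.ofReal_one,
      ← ENNReal.ofReal_add zero_le_one (by nlinarith [hζ.2, div_pos two_pos hζ.1])]
    exact ENNReal.ofReal_le_ofReal (le_of_eq (by field_simp [hζ.1.ne']; ring))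
  have hmass : ∀ N z, pathMass (expTilt p θ) N z ≤ ENNReal.ofReal (2 / ζ) :=
    pathMass_le (expTilt_zero_right_le_one hp0 hp1 θ) (expTilt_zero_succ hp0 hp1 habs θ) hrow hB
  refine ⟨2 / ζ, div_pos two_pos hζ.1, θ, hθ, fun z0 _ t _ => ?_⟩
  rw [measure_lt_tsum_eq_iSup, mul_comm, ENNReal.ofReal_mul (Real.exp_pos _).le]
  exact iSup_le fun N =>
    (measure_partialSum_gt_le (hfdd z0) hp0 hθ.le t N).trans (by gcongr; exact hmass N z0)

/-- For a Markov chain on `ℕ` absorbed at `0`, with transition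
probabilities exponentially decaying in the target state (`p z z' ≤ c e^{−δ z'}` for
`z ≠ 0`) and a uniform probability `ζ` of jumping to `0` from any `z ≠ 0`, the total
value accumulated before absorption has uniformly exponential tails:
`P_{z₀}[∑_{n ≥ 1} Z_n > t] ≤ C e^{−a t}`. -/
theorem markov_total_accumulation_exponential_tail
    {Ω : Type*} [MeasurableSpace Ω]
    (p : ℕ → ℕ → ℝ) (hp0 : ∀ z z', 0 ≤ p z z') (hp1 : ∀ z, HasSum (p z) 1)
    (habs : p 0 0 = 1)
    (Pz : ℕ → Measure Ω) (hprob : ∀ z0, IsProbabilityMeasure (Pz z0))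
    (Z : ℕ → Ω → ℕ) (hZmeas : ∀ n, Measurable (Z n))
    (hfdd : ∀ (z0 n : ℕ) (w : ℕ → ℕ),
      Pz z0 {x | ∀ i ≤ n, Z i x = w i} =
        (if w 0 = z0 then 1 else 0) *
          ∏ i ∈ Finset.range n, ENNReal.ofReal (p (w i) (w (i + 1))))
    (c δ : ℝ) (hc : 0 < c) (hδ : 0 < δ)
    (hexp : ∀ z z', z ≠ 0 → p z z' ≤ c * Real.exp (-δ * z'))
    (ζ : ℝ) (hζ : ζ ∈ Set.Ioo (0 : ℝ) 1) (hζp : ∀ z, z ≠ 0 → ζ ≤ p z 0) :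
    ∃ C > (0 : ℝ), ∃ a > (0 : ℝ), ∀ z0 : ℕ, z0 ≠ 0 → ∀ t : ℝ, 0 < t →
      Pz z0 {x | ENNReal.ofReal t < ∑' n : ℕ, (Z (n + 1) x : ℝ≥0∞)}
        ≤ ENNReal.ofReal (C * Real.exp (-a * t)) :=
  markov_total_accumulation_exponential_tail_general p hp0 hp1 habs Pz Z hfdd c δ hc hδ hexp ζ hζ
    hζp
end

section
/- Suppose there are constants c, δ > 0 with p(z, z') ≤ c e^{−δ z'} for every z ≠ 0 and every z'. Then there exist constants κ > 0, C' > 0 and a' > 0 (depending only on c and δ) such that for every starting state z_0 and every N ≥ 1, P_{z_0}[∑_{n=1}^{N} Z_n > κ N] ≤ C' e^{−a' N}. -/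
/-!
Union bound over the paths `(z₀, v₁, …, v_N)` of the chain. Since row `0` is the point mass
at `0`, every transition satisfies `p z z' ≤ M e^{-δ z'}` with `M = max 1 c`, so a path has
probability at most `M^N e^{-δ ∑ vⱼ}`. On the event, weight each path by the Chernoff factor
`e^{(δ/2)(∑ vⱼ - κN)} ≥ 1`; the weighted sum over all paths factorizes into
`e^{-δκN/2} B^N` with `B = M / (1 - e^{-δ/2})`, which equals `e^{-N}` for
`κ = 2 (log B + 1) / δ`.
-/

open MeasureTheory ProbabilityTheory ENNReal Real

theorem ENNReal.tsum_fin_pi_prod {α : Type*} :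
    ∀ {n : ℕ} (g : Fin n → α → ℝ≥0∞), ∑' v : Fin n → α, ∏ j, g j (v j) = ∏ j, ∑' a, g j a
  | 0, g => by simp
  | n + 1, g => by
    rw [← (Fin.consEquiv fun _ => α).tsum_eq, ENNReal.tsum_prod']
    simp only [Fin.consEquiv_apply, Fin.prod_univ_succ, Fin.cons_zero, Fin.cons_succ,
      ENNReal.tsum_mul_left, ENNReal.tsum_mul_right, ENNReal.tsum_fin_pi_prod]

theorem eq_zero_of_hasSum_of_apply_eq {ι : Type*} {f : ι → ℝ} {a : ℝ} (hf : HasSum f a)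
    (hf0 : ∀ i, 0 ≤ f i) {i j : ι} (hi : f i = a) (hji : j ≠ i) : f j = 0 := by
  classical
  have := sum_le_hasSum {j, i} (fun k _ => hf0 k) hf
  rw [Finset.sum_pair hji, hi] at this
  exact le_antisymm (by linarith) (hf0 j)

theorem measure_preimage_le_tsum_indicator {Ω β : Type*} [MeasurableSpace Ω] [Countable β]
    (μ : Measure Ω) (Y : Ω → β) (s : Set β) :
    μ (Y ⁻¹' s) ≤ ∑' b, s.indicator (fun b => μ (Y ⁻¹' {b})) b :=
  calc μ (Y ⁻¹' s) = μ (⋃ b : s, Y ⁻¹' {(b : β)}) := by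
        rw [← Set.preimage_iUnion, Set.iUnion_of_singleton_coe]
    _ ≤ ∑' b : s, μ (Y ⁻¹' {(b : β)}) := measure_iUnion_le _
    _ = _ := tsum_subtype s fun b => μ (Y ⁻¹' {b})

theorem tsum_ofReal_mul_exp_neg_mul_nat {M s : ℝ} (hM : 0 ≤ M) (hs : 0 < s) :
    ∑' k : ℕ, ENNReal.ofReal (M * exp (-s * k)) = ENNReal.ofReal (M / (1 - exp (-s))) := by
  have hr0 : 0 ≤ exp (-s) := (exp_pos _).le
  have hr1 : exp (-s) < 1 := exp_lt_one_iff.mpr (by linarith)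
  have hpow : ∀ k : ℕ, M * exp (-s * k) = M * exp (-s) ^ k := fun k => by
    rw [← exp_nat_mul, mul_comm (k : ℝ)]
  simp_rw [hpow]
  rw [← ENNReal.ofReal_tsum_of_nonneg (fun k => by positivity)
    ((summable_geometric_of_lt_one hr0 hr1).mul_left M), tsum_mul_left,
    tsum_geometric_of_lt_one hr0 hr1, div_eq_mul_inv]

theorem transition_le_max_one_mul_exp {p : ℕ → ℕ → ℝ} (hp0 : ∀ z z', 0 ≤ p z z')
    (hp1 : ∀ z, HasSum (p z) 1) (habs : p 0 0 = 1) {c δ : ℝ}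
    (hexp : ∀ z z', z ≠ 0 → p z z' ≤ c * exp (-δ * z')) (z z' : ℕ) :
    p z z' ≤ max 1 c * exp (-δ * z') := by
  rcases eq_or_ne z 0 with rfl | hz
  · rcases eq_or_ne z' 0 with rfl | hz'
    · simp [habs]
    · rw [eq_zero_of_hasSum_of_apply_eq (hp1 0) (hp0 0) habs hz']
      positivity
  · exact (hexp z z' hz).trans (by gcongr; exact le_max_right 1 c)

section MarkovChain

open Fin.NatCast

variable {Ω : Type*} [MeasurableSpace Ω]

def IsMarkovChain (p : ℕ → ℕ → ℝ) (Pz : ℕ → Measure Ω) (Z : ℕ → Ω → ℕ) : Prop :=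
  ∀ (z0 n : ℕ) (w : ℕ → ℕ), Pz z0 {x | ∀ i ≤ n, Z i x = w i} =
    (if w 0 = z0 then 1 else 0) * ∏ i ∈ Finset.range n, ENNReal.ofReal (p (w i) (w (i + 1)))

def trajectory (Z : ℕ → Ω → ℕ) (N : ℕ) (x : Ω) : Fin (N + 1) → ℕ := fun j => Z j x

variable {p : ℕ → ℕ → ℝ} {Pz : ℕ → Measure Ω} {Z : ℕ → Ω → ℕ}

theorem IsMarkovChain.measure_trajectory_eq (h : IsMarkovChain p Pz Z) (z0 : ℕ) {N : ℕ}
    (v : Fin (N + 1) → ℕ) :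
    Pz z0 (trajectory Z N ⁻¹' {v}) =
      (if v 0 = z0 then 1 else 0) * ∏ j : Fin N, ENNReal.ofReal (p (v j.castSucc) (v j.succ)) := by
  have hset : trajectory Z N ⁻¹' {v} = {x | ∀ i ≤ N, Z i x = v i} := by
    ext x
    simp only [Set.mem_preimage, Set.mem_singleton_iff, funext_iff, trajectory, Set.mem_ofPred_eq]
    constructor
    · intro hx i hi
      simpa [Fin.val_cast_of_lt (Nat.lt_succ_of_le hi)] using hx i
    · intro hx j
      simpa using hx j (Nat.le_of_lt_succ j.isLt)
  rw [hset, h, ← Fin.prod_univ_eq_prod_range]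
  congr 2
  ext j
  congr 3 <;> ext <;> simp

theorem IsMarkovChain.indicator_measure_trajectory_le (h : IsMarkovChain p Pz Z) {q : ℕ → ℝ}
    (hq : ∀ z z', p z z' ≤ q z') {t : ℝ} (ht : 0 ≤ t) (z0 : ℕ) {N : ℕ} (a : ℝ)
    (v : Fin (N + 1) → ℕ) :
    {v : Fin (N + 1) → ℕ | a < ∑ j : Fin N, (v j.succ : ℝ)}.indicator
        (fun v => Pz z0 (trajectory Z N ⁻¹' {v})) v ≤
      ENNReal.ofReal (exp (-t * a)) * ((if v 0 = z0 then 1 else 0) *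
        ∏ j : Fin N, ENNReal.ofReal (exp (t * v j.succ) * q (v j.succ))) := by
  by_cases hv : v ∈ {v : Fin (N + 1) → ℕ | a < ∑ j : Fin N, (v j.succ : ℝ)}
  · rw [Set.indicator_of_mem hv, h.measure_trajectory_eq]
    have htilt : 1 ≤ exp (-t * a) * ∏ j : Fin N, exp (t * v j.succ) := by
      rw [← exp_sum, ← exp_add, one_le_exp_iff, ← Finset.mul_sum]
      nlinarith [show a < _ from hv]
    calc _ ≤ (if v 0 = z0 then 1 else 0) * ∏ j : Fin N, ENNReal.ofReal (q (v j.succ)) := by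
          gcongr with j
          exact hq _ _
      _ ≤ ENNReal.ofReal (exp (-t * a) * ∏ j : Fin N, exp (t * v j.succ)) *
            ((if v 0 = z0 then 1 else 0) * ∏ j : Fin N, ENNReal.ofReal (q (v j.succ))) :=
          le_mul_of_one_le_left' (by simpa using ENNReal.ofReal_le_ofReal htilt)
      _ = _ := by
        simp_rw [ENNReal.ofReal_mul (exp_pos _).le, ENNReal.ofReal_prod_of_nonneg
          (fun (j : Fin N) _ => (exp_pos (t * v j.succ)).le), Finset.prod_mul_distrib]
        ring
  · simp [Set.indicator_of_notMem hv]

theorem IsMarkovChain.measure_lt_sum_le (h : IsMarkovChain p Pz Z) {q : ℕ → ℝ}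
    (hq : ∀ z z', p z z' ≤ q z') {t : ℝ} (ht : 0 ≤ t) (z0 N : ℕ) (a : ℝ) :
    Pz z0 {x | a < ∑ n ∈ Finset.Icc 1 N, (Z n x : ℝ)} ≤
      ENNReal.ofReal (exp (-t * a)) * (∑' k : ℕ, ENNReal.ofReal (exp (t * k) * q k)) ^ N := by
  set g : Fin (N + 1) → ℕ → ℝ≥0∞ :=
    Fin.cons (fun k => if k = z0 then 1 else 0) fun _ k => ENNReal.ofReal (exp (t * k) * q k)
  set s : Set (Fin (N + 1) → ℕ) := {v | a < ∑ j : Fin N, (v j.succ : ℝ)}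
  have hevent : {x | a < ∑ n ∈ Finset.Icc 1 N, (Z n x : ℝ)} = trajectory Z N ⁻¹' s := by
    ext x
    rw [Set.mem_ofPred_eq, Set.mem_preimage, Set.mem_ofPred_eq, ← Finset.Ico_add_one_right_eq_Icc,
      Finset.sum_Ico_eq_sum_range, ← Fin.sum_univ_eq_sum_range]
    simp [trajectory, add_comm]
  calc _ = Pz z0 (trajectory Z N ⁻¹' s) := by rw [hevent]
    _ ≤ ∑' v, s.indicator (fun v => Pz z0 (trajectory Z N ⁻¹' {v})) v :=
      measure_preimage_le_tsum_indicator _ _ _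
    _ ≤ ∑' v, ENNReal.ofReal (exp (-t * a)) * ∏ j, g j (v j) := ENNReal.tsum_le_tsum fun v =>
      (h.indicator_measure_trajectory_le hq ht z0 a v).trans_eq (by simp [g, Fin.prod_univ_succ])
    _ = _ := by
      rw [ENNReal.tsum_mul_left, ENNReal.tsum_fin_pi_prod, Fin.prod_univ_succ]
      simp [g, tsum_ite_eq]

end MarkovChain

theorem markov_partial_sums_large_deviation_general
    {Ω : Type*} [MeasurableSpace Ω]
    (p : ℕ → ℕ → ℝ) (hp0 : ∀ z z', 0 ≤ p z z') (hp1 : ∀ z, HasSum (p z) 1)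
    (habs : p 0 0 = 1)
    (Pz : ℕ → Measure Ω)
    (Z : ℕ → Ω → ℕ)
    (hfdd : ∀ (z0 n : ℕ) (w : ℕ → ℕ),
      Pz z0 {x | ∀ i ≤ n, Z i x = w i} =
        (if w 0 = z0 then 1 else 0) *
          ∏ i ∈ Finset.range n, ENNReal.ofReal (p (w i) (w (i + 1))))
    (c δ : ℝ) (hδ : 0 < δ)
    (hexp : ∀ z z', z ≠ 0 → p z z' ≤ c * Real.exp (-δ * z')) :
    ∃ κ > (0 : ℝ), ∃ C' > (0 : ℝ), ∃ a' > (0 : ℝ), ∀ (z0 N : ℕ), 1 ≤ N →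
      Pz z0 {x | κ * N < ∑ n ∈ Finset.Icc 1 N, (Z n x : ℝ)}
        ≤ ENNReal.ofReal (C' * Real.exp (-a' * N)) := by
  have hM : 1 ≤ max 1 c := le_max_left 1 c
  have hr : 0 < 1 - exp (-(δ / 2)) := sub_pos.2 (exp_lt_one_iff.2 (by linarith))
  set B := max 1 c / (1 - exp (-(δ / 2)))
  have hB : 1 ≤ B := by
    rw [le_div_iff₀ hr]
    nlinarith [exp_pos (-(δ / 2))]
  have hmass : ∀ k : ℕ, exp (δ / 2 * k) * (max 1 c * exp (-δ * k)) =
      max 1 c * exp (-(δ / 2) * k) := fun k => by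
    rw [mul_left_comm, ← exp_add]
    ring_nf
  refine ⟨2 * (log B + 1) / δ, by have := log_nonneg hB; positivity, 1, one_pos, 1, one_pos,
    fun z0 N _ => ?_⟩
  calc _ ≤ ENNReal.ofReal (exp (-(δ / 2) * (2 * (log B + 1) / δ * N))) *
          (∑' k : ℕ, ENNReal.ofReal (exp (δ / 2 * k) * (max 1 c * exp (-δ * k)))) ^ N :=
        IsMarkovChain.measure_lt_sum_le hfdd (transition_le_max_one_mul_exp hp0 hp1 habs hexp)
          (by positivity) z0 N _
    _ = ENNReal.ofReal (exp (-(δ / 2) * (2 * (log B + 1) / δ * N)) * B ^ N) := by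
        simp_rw [hmass]
        rw [tsum_ofReal_mul_exp_neg_mul_nat (by linarith) (by positivity),
          ENNReal.ofReal_mul (exp_pos _).le, ENNReal.ofReal_pow (by positivity)]
    _ = ENNReal.ofReal (1 * exp (-1 * N)) := by
        rw [← Real.rpow_natCast, rpow_def_of_pos (by positivity), ← exp_add, one_mul]
        congr 2
        field_simp
        ring

/-- For a Markov chain on `ℕ` absorbed at `0` whose transition
probabilities decay exponentially in the target state (`p z z' ≤ c e^{−δ z'}` for
`z ≠ 0`), there are `κ, C', a' > 0` (depending only on `c` and `δ`) such that
`P_{z₀}[∑_{n=1}^N Z_n > κ N] ≤ C' e^{−a' N}` for every start `z₀` and every `N ≥ 1`. -/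
theorem markov_partial_sums_large_deviation
    {Ω : Type*} [MeasurableSpace Ω]
    (p : ℕ → ℕ → ℝ) (hp0 : ∀ z z', 0 ≤ p z z') (hp1 : ∀ z, HasSum (p z) 1)
    (habs : p 0 0 = 1)
    (Pz : ℕ → Measure Ω) (hprob : ∀ z0, IsProbabilityMeasure (Pz z0))
    (Z : ℕ → Ω → ℕ) (hZmeas : ∀ n, Measurable (Z n))
    (hfdd : ∀ (z0 n : ℕ) (w : ℕ → ℕ),
      Pz z0 {x | ∀ i ≤ n, Z i x = w i} =
        (if w 0 = z0 then 1 else 0) *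
          ∏ i ∈ Finset.range n, ENNReal.ofReal (p (w i) (w (i + 1))))
    (c δ : ℝ) (hc : 0 < c) (hδ : 0 < δ)
    (hexp : ∀ z z', z ≠ 0 → p z z' ≤ c * Real.exp (-δ * z')) :
    ∃ κ > (0 : ℝ), ∃ C' > (0 : ℝ), ∃ a' > (0 : ℝ), ∀ (z0 N : ℕ), 1 ≤ N →
      Pz z0 {x | κ * N < ∑ n ∈ Finset.Icc 1 N, (Z n x : ℝ)}
        ≤ ENNReal.ofReal (C' * Real.exp (-a' * N)) :=
  markov_partial_sums_large_deviation_general p hp0 hp1 habs Pz Z hfdd c δ hδ hexp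
end

section
/- Let ε > 0 and c > 0 with 4cε ≤ 1, and suppose that for every λ ∈ [ε/2, 3ε/2] one has |∑_{u ∈ ℛ} w_λ(u) − (ε/λ)²| ≤ cε. Then there exists a unique λ* > 0 such that ∑_{u ∈ ℛ} w_{λ*}(u) = 1, and this λ* satisfies |λ* − ε| ≤ c ε². -/
/-!
Write `F(λ) = ∑_{u ∈ ℛ} w_λ(u)`. Where it converges, `F` is continuous and, since every
`|u|` is positive, strictly decreasing; and `F(λ) = 1` forces convergence. With `x = cε ≤ 1/4`,
the hypothesis at `λ = ε(1 ∓ x)`, where `(ε/λ)² = (1 ∓ x)⁻²`, gives `F(ε - cε²) ≥ 1 ≥ F(ε + cε²)`,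
so the intermediate value theorem and strict monotonicity place exactly one root of `F = 1`,
and it lies in `[ε - cε², ε + cε²]`.
-/

/-- The set `ℛ` of finite nonempty sequences of quadruples of positive integers
`(u_{ℓ,1}, u_{ℓ,2}, u_{ℓ,3}, u_{ℓ,4})_{ℓ = 0,…,k}` with `u_{0,1} ≥ 3` and, for every
`ℓ`, `u_{ℓ,1} ≥ 1`, `u_{ℓ,2} ≥ 2`, `u_{ℓ,3} ≥ 1`, `u_{ℓ,4} ≥ 2`. -/
def Rset : Set (Σ k : ℕ, Fin (k + 1) → Fin 4 → ℕ) :=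
  {s | 3 ≤ s.2 0 0 ∧ ∀ ℓ, 1 ≤ s.2 ℓ 0 ∧ 2 ≤ s.2 ℓ 1 ∧ 1 ≤ s.2 ℓ 2 ∧ 2 ≤ s.2 ℓ 3}

/-- The length `|u| = ∑_{ℓ,m} u_{ℓ,m}` of a sequence of quadruples. -/
def seqLen (s : Σ k : ℕ, Fin (k + 1) → Fin 4 → ℕ) : ℕ := ∑ ℓ, ∑ m, s.2 ℓ m

open Real Set

section LaplaceSum

variable {ι : Type*}

noncomputable def laplaceTerm (n w : ι → ℝ) (lam : ℝ) (i : ι) : ℝ := exp (-lam * n i) * w i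

noncomputable def laplaceSum (n w : ι → ℝ) (lam : ℝ) : ℝ := ∑' i, laplaceTerm n w lam i

variable {n w : ι → ℝ}

lemma laplaceTerm_nonneg (hw : ∀ i, 0 ≤ w i) (lam : ℝ) (i : ι) : 0 ≤ laplaceTerm n w lam i :=
  mul_nonneg (exp_pos _).le (hw i)

lemma laplaceTerm_le_of_le (hn : ∀ i, 0 ≤ n i) (hw : ∀ i, 0 ≤ w i) {a b : ℝ} (hab : a ≤ b)
    (i : ι) : laplaceTerm n w b i ≤ laplaceTerm n w a i :=
  mul_le_mul_of_nonneg_right (exp_le_exp.2 (by nlinarith [hn i])) (hw i)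

lemma laplaceTerm_lt_of_lt {i : ι} (hni : 0 < n i) (hwi : 0 < w i) {a b : ℝ} (hab : a < b) :
    laplaceTerm n w b i < laplaceTerm n w a i :=
  mul_lt_mul_of_pos_right (exp_lt_exp.2 (by nlinarith)) hwi

lemma summable_laplaceTerm_of_le (hn : ∀ i, 0 ≤ n i) (hw : ∀ i, 0 ≤ w i) {a b : ℝ}
    (hab : a ≤ b) (ha : Summable (laplaceTerm n w a)) : Summable (laplaceTerm n w b) :=
  ha.of_nonneg_of_le (laplaceTerm_nonneg hw b) (laplaceTerm_le_of_le hn hw hab)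

lemma summable_laplaceTerm_of_laplaceSum_ne_zero {lam : ℝ} (h : laplaceSum n w lam ≠ 0) :
    Summable (laplaceTerm n w lam) := by
  by_contra hs
  exact h (tsum_eq_zero_of_not_summable hs)

lemma ne_zero_of_laplaceSum_ne_zero {lam : ℝ} (h : laplaceSum n w lam ≠ 0) : w ≠ 0 := by
  rintro rfl
  simp [laplaceSum, laplaceTerm] at h

lemma strictAntiOn_laplaceSum (hn : ∀ i, 0 < n i) (hw : ∀ i, 0 ≤ w i) (hw0 : w ≠ 0) :
    StrictAntiOn (laplaceSum n w) {lam | Summable (laplaceTerm n w lam)} := by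
  obtain ⟨i, hi⟩ := Function.ne_iff.1 hw0
  intro a ha b hb hab
  exact Summable.tsum_lt_tsum (laplaceTerm_le_of_le (fun j => (hn j).le) hw hab.le)
    (laplaceTerm_lt_of_lt (hn i) ((hw i).lt_of_ne' hi) hab) hb ha

lemma continuousOn_laplaceSum (hn : ∀ i, 0 ≤ n i) (hw : ∀ i, 0 ≤ w i) {a : ℝ}
    (ha : Summable (laplaceTerm n w a)) : ContinuousOn (laplaceSum n w) (Ici a) :=
  continuousOn_tsum (fun i => by unfold laplaceTerm; fun_prop) ha fun i lam hlam => by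
    rw [norm_of_nonneg (laplaceTerm_nonneg hw lam i)]
    exact laplaceTerm_le_of_le hn hw hlam i

theorem existsUnique_laplaceSum_eq_one (hn : ∀ i, 0 < n i) (hw : ∀ i, 0 ≤ w i) {a b : ℝ}
    (hab : a ≤ b) (ha : 1 ≤ laplaceSum n w a) (hb : laplaceSum n w b ≤ 1) :
    (∃! lam, laplaceSum n w lam = 1) ∧ ∀ lam, laplaceSum n w lam = 1 → lam ∈ Icc a b := by
  have haF : laplaceSum n w a ≠ 0 := (one_pos.trans_le ha).ne'
  have haS := summable_laplaceTerm_of_laplaceSum_ne_zero haF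
  have hbS := summable_laplaceTerm_of_le (fun i => (hn i).le) hw hab haS
  have hroot {lam : ℝ} (h : laplaceSum n w lam = 1) : Summable (laplaceTerm n w lam) :=
    summable_laplaceTerm_of_laplaceSum_ne_zero (h ▸ one_ne_zero)
  have hanti := strictAntiOn_laplaceSum hn hw (ne_zero_of_laplaceSum_ne_zero haF)
  have hcont : ContinuousOn (laplaceSum n w) (Icc a b) :=
    (continuousOn_laplaceSum (fun i => (hn i).le) hw haS).mono Icc_subset_Ici_self
  obtain ⟨lam, -, hlam⟩ := intermediate_value_Icc' hab hcont (show (1 : ℝ) ∈ Icc _ _ from ⟨hb, ha⟩)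
  refine ⟨⟨lam, hlam, fun μ hμ => hanti.injOn (hroot hμ) (hroot hlam) (hμ.trans hlam.symm)⟩,
    fun μ hμ => ⟨?_, ?_⟩⟩
  · exact (hanti.le_iff_ge (hroot hμ) haS).1 (hμ ▸ ha)
  · exact (hanti.le_iff_ge hbS (hroot hμ)).1 (hμ ▸ hb)

end LaplaceSum

lemma one_add_le_inv_one_sub_sq {x : ℝ} (hx0 : 0 ≤ x) (hx1 : x < 1) : 1 + x ≤ ((1 - x)⁻¹) ^ 2 := by
  rw [inv_pow, ← one_div, le_div_iff₀ (by nlinarith)]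
  nlinarith [mul_nonneg hx0 hx0, mul_nonneg (mul_nonneg hx0 hx0) hx0]

lemma inv_one_add_sq_le_one_sub {x : ℝ} (hx0 : 0 ≤ x) (hx : x ≤ 1 / 2) :
    ((1 + x)⁻¹) ^ 2 ≤ 1 - x := by
  rw [inv_pow, ← one_div, div_le_iff₀ (by positivity)]
  nlinarith [mul_nonneg hx0 hx0, mul_nonneg (mul_nonneg hx0 hx0) hx0]

lemma seqLen_pos_of_mem {s : Σ k : ℕ, Fin (k + 1) → Fin 4 → ℕ} (hs : s ∈ Rset) :
    0 < seqLen s :=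
  calc 0 < s.2 0 0 := by linarith [hs.1]
    _ ≤ ∑ m, s.2 0 m := Finset.single_le_sum (fun _ _ => Nat.zero_le _) (Finset.mem_univ 0)
    _ ≤ seqLen s := Finset.single_le_sum (f := fun ℓ => ∑ m, s.2 ℓ m)
        (fun _ _ => Nat.zero_le _) (Finset.mem_univ 0)

/-- If `|∑_{u ∈ ℛ} w_λ(u) − (ε/λ)²| ≤ cε` for all
`λ ∈ [ε/2, 3ε/2]`, with `4cε ≤ 1`, then there is a unique `λ* > 0` with
`∑_{u ∈ ℛ} w_{λ*}(u) = 1`, and it satisfies `|λ* − ε| ≤ cε²`. -/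
theorem exists_unique_normalizing_lambda
    (w : (Σ k : ℕ, Fin (k + 1) → Fin 4 → ℕ) → ℝ) (hw : ∀ u, 0 ≤ w u)
    (ε c : ℝ) (hε : 0 < ε) (hc : 0 < c) (hcε : 4 * c * ε ≤ 1)
    (h : ∀ lam ∈ Set.Icc (ε / 2) (3 * ε / 2),
      |(∑' u : Rset, Real.exp (-lam * seqLen u.1) * w u.1) - (ε / lam) ^ 2| ≤ c * ε) :
    (∃! lam : ℝ, 0 < lam ∧
      (∑' u : Rset, Real.exp (-lam * seqLen u.1) * w u.1) = 1) ∧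
    ∀ lam : ℝ, 0 < lam →
      (∑' u : Rset, Real.exp (-lam * seqLen u.1) * w u.1) = 1 →
      |lam - ε| ≤ c * ε ^ 2 := by
  set F := laplaceSum (fun u : Rset => (seqLen u.1 : ℝ)) (fun u => w u.1)
  change ∀ lam ∈ Icc (ε / 2) (3 * ε / 2), |F lam - (ε / lam) ^ 2| ≤ c * ε at h
  change (∃! lam : ℝ, 0 < lam ∧ F lam = 1) ∧ ∀ lam : ℝ, 0 < lam → F lam = 1 → |lam - ε| ≤ c * ε ^ 2
  have hx0 : 0 ≤ c * ε := by positivity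
  have hxε : c * ε ^ 2 ≤ ε / 4 := by nlinarith
  have hratio₁ : ε / (ε - c * ε ^ 2) = (1 - c * ε)⁻¹ := by
    rw [show ε - c * ε ^ 2 = ε * (1 - c * ε) by ring, div_mul_cancel_left₀ hε.ne']
  have hratio₂ : ε / (ε + c * ε ^ 2) = (1 + c * ε)⁻¹ := by
    rw [show ε + c * ε ^ 2 = ε * (1 + c * ε) by ring, div_mul_cancel_left₀ hε.ne']
  have h₁ : 1 ≤ F (ε - c * ε ^ 2) := by
    have := abs_le.1 (h (ε - c * ε ^ 2) ⟨by linarith, by linarith [mul_nonneg hx0 hε.le]⟩)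
    rw [hratio₁] at this
    linarith [one_add_le_inv_one_sub_sq hx0 (by linarith)]
  have h₂ : F (ε + c * ε ^ 2) ≤ 1 := by
    have := abs_le.1 (h (ε + c * ε ^ 2) ⟨by linarith [mul_nonneg hx0 hε.le], by linarith⟩)
    rw [hratio₂] at this
    linarith [inv_one_add_sq_le_one_sub hx0 (by linarith)]
  obtain ⟨⟨lam, hlam, huniq⟩, hloc⟩ := existsUnique_laplaceSum_eq_one
    (fun u : Rset => by exact_mod_cast seqLen_pos_of_mem u.2) (fun u => hw u.1)
    (by linarith [mul_nonneg hx0 hε.le]) h₁ h₂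
  refine ⟨⟨lam, ⟨by linarith [(hloc lam hlam).1], hlam⟩, fun μ hμ => huniq μ hμ.2⟩,
    fun μ _ hμ => abs_sub_le_iff.2 ⟨by linarith [(hloc μ hμ).2], by linarith [(hloc μ hμ).1]⟩⟩
end

section
/- For every real β > 1 there exists exactly one m > 0 satisfying the mean field equation m = tanh(β m), and this solution lies in the open interval (0, 1). -/
/-!
Since `tanh` is strictly concave on `[0, ∞)` and vanishes at `0`, the ratio `tanh x / x` is
strictly decreasing on `(0, ∞)`; it tends to `tanh' 0 = 1` at `0⁺` and is below `c` at `x = c⁻¹`.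
Hence it takes every value `c ∈ (0, 1)` exactly once. Substituting `x = β m`, the positive
solutions of `m = tanh (β m)` are exactly the `x / β` with `tanh x / x = β⁻¹`, and `m < 1` because
`tanh < 1`.
-/

open Set Filter Topology

theorem StrictConcaveOn.strictAntiOn_div_self {f : ℝ → ℝ} (hf : StrictConcaveOn ℝ (Ici 0) f)
    (hf0 : f 0 = 0) : StrictAntiOn (fun x ↦ f x / x) (Ioi 0) := by
  intro x hx y hy hxy
  simpa [hf0] using
    hf.secant_strict_mono self_mem_Ici (mem_Ici.2 hx.le) (mem_Ici.2 hy.le) hx.ne' hy.ne' hxy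

namespace Real

theorem hasDerivAt_tanh (x : ℝ) : HasDerivAt tanh (cosh x ^ 2)⁻¹ x := by
  have h := (hasDerivAt_sinh x).div (hasDerivAt_cosh x) (cosh_pos x).ne'
  rw [← sq, ← sq, cosh_sq_sub_sinh_sq, one_div] at h
  rwa [show tanh = sinh / cosh from funext tanh_eq_sinh_div_cosh]

theorem deriv_tanh : deriv tanh = fun x ↦ (cosh x ^ 2)⁻¹ :=
  funext fun x ↦ (hasDerivAt_tanh x).deriv

theorem continuous_tanh : Continuous tanh :=
  continuous_iff_continuousAt.2 fun x ↦ (hasDerivAt_tanh x).continuousAt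

theorem strictConcaveOn_tanh : StrictConcaveOn ℝ (Ici 0) tanh := by
  refine StrictAntiOn.strictConcaveOn_of_deriv (convex_Ici 0) continuous_tanh.continuousOn ?_
  rw [interior_Ici, deriv_tanh]
  intro x hx y hy hxy
  dsimp only
  gcongr
  exact cosh_strictMonoOn (mem_Ici.2 hx.le) (mem_Ici.2 hy.le) hxy

theorem strictAntiOn_tanh_div_self : StrictAntiOn (fun x ↦ tanh x / x) (Ioi 0) :=
  strictConcaveOn_tanh.strictAntiOn_div_self tanh_zero

theorem tendsto_tanh_div_self : Tendsto (fun x ↦ tanh x / x) (𝓝[>] 0) (𝓝 1) := by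
  simpa [div_eq_inv_mul] using (hasDerivAt_tanh 0).tendsto_slope_zero_right

theorem exists_tanh_div_self_eq {c : ℝ} (hc0 : 0 < c) (hc1 : c < 1) :
    ∃ x, 0 < x ∧ tanh x / x = c := by
  obtain ⟨ε, hεc, hε⟩ : ∃ ε, c < tanh ε / ε ∧ ε ∈ Ioo 0 c⁻¹ :=
    ((tendsto_tanh_div_self.eventually (lt_mem_nhds hc1)).and
      (Ioo_mem_nhdsGT (inv_pos.2 hc0))).exists
  have hcont : ContinuousOn (fun x ↦ tanh x / x) (Icc ε c⁻¹) :=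
    continuous_tanh.continuousOn.div continuousOn_id fun x hx ↦ (hε.1.trans_le hx.1).ne'
  have hc_inv : tanh c⁻¹ / c⁻¹ < c := by
    rw [div_inv_eq_mul]
    exact mul_lt_of_lt_one_left hc0 (tanh_lt_one _)
  obtain ⟨x, hx, hxc⟩ := intermediate_value_Icc' hε.2.le hcont ⟨hc_inv.le, hεc.le⟩
  exact ⟨x, hε.1.trans_le hx.1, hxc⟩

end Real

/-- For every `β > 1` there is exactly one `m > 0` with
`m = tanh(β m)`, and any such solution lies in `(0, 1)`. -/
theorem mean_field_equation_unique_positive_solution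
    (β : ℝ) (hβ : 1 < β) :
    (∃! m : ℝ, 0 < m ∧ m = Real.tanh (β * m)) ∧
    ∀ m : ℝ, 0 < m → m = Real.tanh (β * m) → m ∈ Set.Ioo (0 : ℝ) 1 := by
  have hβ0 : 0 < β := one_pos.trans hβ
  have fixed_iff {m : ℝ} (hm : 0 < m) :
      m = Real.tanh (β * m) ↔ Real.tanh (β * m) / (β * m) = β⁻¹ := by
    field_simp
    exact eq_comm
  obtain ⟨x, hx0, hx⟩ := Real.exists_tanh_div_self_eq (inv_pos.2 hβ0) (inv_lt_one_of_one_lt₀ hβ)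
  refine ⟨⟨x / β, ⟨div_pos hx0 hβ0, ?_⟩, ?_⟩, fun m hm0 hm ↦ ⟨hm0, hm ▸ Real.tanh_lt_one _⟩⟩
  · rwa [fixed_iff (div_pos hx0 hβ0), mul_div_cancel₀ x hβ0.ne']
  · rintro m ⟨hm0, hm⟩
    rw [eq_div_iff hβ0.ne', mul_comm]
    refine Real.strictAntiOn_tanh_div_self.injOn (mul_pos hβ0 hm0) hx0 ?_
    rw [(fixed_iff hm0).1 hm, hx]
end

section
/- Let β > 1 and let m_β ∈ (0,1) be the unique positive solution of m = tanh(β m). Then f_β is an even function on [−1, 1], and for every m ∈ [−1, 1] one has f_β(m) ≥ f_β(m_β), with equality if and only if m = m_β or m = −m_β; that is, f_β is a symmetric two-well function whose minimizers are exactly ±m_β. -/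
/-- The entropy `S(m) = −((1−m)/2) log((1−m)/2) − ((1+m)/2) log((1+m)/2)`; note that
`Real.log 0 = 0` in Mathlib, which implements the convention `0 · log 0 = 0`. -/
noncomputable def entropyS (m : ℝ) : ℝ :=
  -((1 - m) / 2) * Real.log ((1 - m) / 2) - ((1 + m) / 2) * Real.log ((1 + m) / 2)

/-- The mean field free energy `f_β(m) = −m²/2 − S(m)/β`. -/
noncomputable def meanFieldFreeEnergy (β m : ℝ) : ℝ :=
  -m ^ 2 / 2 - entropyS m / β

/-!
On `(-1, 1)` one has `f_β'(m) = artanh m / β - m`. Since `artanh` is strictly convex on `[0, 1)`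
and vanishes at `0`, the slope `artanh m / m` is strictly increasing on `(0, 1)`, and the fixed
point equation `m_β = tanh (β m_β)` says exactly that this slope equals `β` at `m_β`. Hence `f_β`
strictly decreases on `[0, m_β]` and strictly increases on `[m_β, 1]`; evenness of `f_β` transfers
this to `[-1, 0]`.
-/

open Real Set

theorem Real.artanh_eq_half_log_sub {x : ℝ} (hx : x ∈ Ioo (-1) 1) :
    artanh x = (log (1 + x) - log (1 - x)) / 2 := by
  have h₁ : 0 < 1 + x := by linarith [hx.1]
  have h₂ : 0 < 1 - x := by linarith [hx.2]
  rw [artanh_eq_half_log (Ioo_subset_Icc_self hx), log_div h₁.ne' h₂.ne']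
  ring

theorem Real.hasDerivAt_artanh {x : ℝ} (hx : x ∈ Ioo (-1) 1) :
    HasDerivAt artanh (1 - x ^ 2)⁻¹ x := by
  have h₁ : 1 + x ≠ 0 := by linarith [hx.1]
  have h₂ : 1 - x ≠ 0 := by linarith [hx.2]
  have hlog : HasDerivAt (fun y ↦ (log (1 + y) - log (1 - y)) / 2) (1 - x ^ 2)⁻¹ x := by
    refine (((((hasDerivAt_id x).const_add 1).log h₁).sub
      (((hasDerivAt_id x).const_sub 1).log h₂)).div_const 2).congr_deriv ?_
    rw [show 1 - x ^ 2 = (1 + x) * (1 - x) by ring, id]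
    field_simp
    ring
  refine hlog.congr_of_eventuallyEq ?_
  filter_upwards [Ioo_mem_nhds hx.1 hx.2] with y hy using artanh_eq_half_log_sub hy

theorem Real.strictConvexOn_artanh : StrictConvexOn ℝ (Ico 0 1) artanh := by
  have hsub : Ico (0 : ℝ) 1 ⊆ Ioo (-1) 1 := fun x hx ↦ ⟨by linarith [hx.1], hx.2⟩
  refine StrictMonoOn.strictConvexOn_of_deriv (convex_Ico 0 1)
    (fun x hx ↦ (hasDerivAt_artanh (hsub hx)).continuousAt.continuousWithinAt) ?_
  rw [interior_Ico]
  intro x hx y hy hxy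
  rw [(hasDerivAt_artanh (hsub (Ioo_subset_Ico_self hx))).deriv,
    (hasDerivAt_artanh (hsub (Ioo_subset_Ico_self hy))).deriv]
  gcongr
  · nlinarith [hy.1, hy.2]
  · nlinarith [hx.1, hx.2]

theorem Real.strictMonoOn_artanh_div_self : StrictMonoOn (fun x ↦ artanh x / x) (Ioo 0 1) := by
  intro x hx y hy hxy
  simpa [artanh_zero] using strictConvexOn_artanh.secant_strict_mono ⟨le_rfl, one_pos⟩
    (Ioo_subset_Ico_self hx) (Ioo_subset_Ico_self hy) hx.1.ne' hy.1.ne' hxy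

theorem entropyS_eq_negMulLog (m : ℝ) :
    entropyS m = negMulLog ((1 - m) / 2) + negMulLog ((1 + m) / 2) := by
  simp only [entropyS, negMulLog]
  ring

theorem hasDerivAt_entropyS {x : ℝ} (hx : x ∈ Ioo (-1) 1) :
    HasDerivAt entropyS (-artanh x) x := by
  have h₁ : (1 - x) / 2 ≠ 0 := by linarith [hx.2]
  have h₂ : (1 + x) / 2 ≠ 0 := by linarith [hx.1]
  have h := ((hasDerivAt_negMulLog h₁).comp x (((hasDerivAt_id x).const_sub 1).div_const 2)).add
    ((hasDerivAt_negMulLog h₂).comp x (((hasDerivAt_id x).const_add 1).div_const 2))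
  rw [funext entropyS_eq_negMulLog]
  refine h.congr_deriv ?_
  rw [artanh_eq_half_log_sub hx, log_div (by linarith [hx.2]) two_ne_zero,
    log_div (by linarith [hx.1]) two_ne_zero]
  ring

theorem hasDerivAt_meanFieldFreeEnergy (β : ℝ) {x : ℝ} (hx : x ∈ Ioo (-1) 1) :
    HasDerivAt (meanFieldFreeEnergy β) (artanh x / β - x) x := by
  refine (((hasDerivAt_pow 2 x).neg.div_const 2).sub
    ((hasDerivAt_entropyS hx).div_const β)).congr_deriv ?_
  ring

theorem continuous_meanFieldFreeEnergy (β : ℝ) : Continuous (meanFieldFreeEnergy β) := by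
  unfold meanFieldFreeEnergy
  simp_rw [entropyS_eq_negMulLog]
  fun_prop

theorem meanFieldFreeEnergy_neg (β m : ℝ) :
    meanFieldFreeEnergy β (-m) = meanFieldFreeEnergy β m := by
  rw [meanFieldFreeEnergy, meanFieldFreeEnergy, entropyS_eq_negMulLog, entropyS_eq_negMulLog,
    neg_sq, sub_neg_eq_add, ← sub_eq_add_neg, add_comm (negMulLog _)]

theorem meanFieldFreeEnergy_abs (β m : ℝ) :
    meanFieldFreeEnergy β |m| = meanFieldFreeEnergy β m := by
  rcases abs_choice m with h | h <;> rw [h]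
  exact meanFieldFreeEnergy_neg β m

theorem StrictAntiOn.apply_lt_of_strictMonoOn {α γ : Type*} [LinearOrder α] [Preorder γ]
    {f : α → γ} {a b c x : α} (h₁ : StrictAntiOn f (Icc a c)) (h₂ : StrictMonoOn f (Icc c b))
    (hac : a ≤ c) (hcb : c ≤ b) (hx : x ∈ Icc a b) (hxc : x ≠ c) : f c < f x := by
  rcases hxc.lt_or_gt with hlt | hgt
  · exact h₁ ⟨hx.1, hlt.le⟩ ⟨hac, le_rfl⟩ hlt
  · exact h₂ ⟨le_rfl, hcb⟩ ⟨hgt.le, hx.2⟩ hgt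

theorem Real.artanh_div_self_of_eq_tanh_mul {β m : ℝ} (hm : m ≠ 0) (hfix : m = tanh (β * m)) :
    artanh m / m = β := by
  have h : artanh m = β * m := by
    conv_lhs => rw [hfix]
    exact artanh_tanh _
  rw [h, mul_div_cancel_right₀ _ hm]

section TwoWells

variable {β mβ : ℝ}

theorem meanFieldFreeEnergy_strictAntiOn (hβ : 0 < β) (hmem : mβ ∈ Ioo 0 1)
    (hfix : mβ = tanh (β * mβ)) : StrictAntiOn (meanFieldFreeEnergy β) (Icc 0 mβ) := by
  refine strictAntiOn_of_deriv_neg (convex_Icc 0 mβ)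
    (continuous_meanFieldFreeEnergy β).continuousOn fun x hx ↦ ?_
  rw [interior_Icc] at hx
  have hx₁ : x ∈ Ioo 0 1 := ⟨hx.1, hx.2.trans hmem.2⟩
  rw [(hasDerivAt_meanFieldFreeEnergy β ⟨by linarith [hx₁.1], hx₁.2⟩).deriv, sub_neg,
    div_lt_iff₀ hβ, ← div_lt_iff₀' hx₁.1]
  calc artanh x / x < artanh mβ / mβ := strictMonoOn_artanh_div_self hx₁ hmem hx.2
    _ = β := artanh_div_self_of_eq_tanh_mul hmem.1.ne' hfix

theorem meanFieldFreeEnergy_strictMonoOn (hβ : 0 < β) (hmem : mβ ∈ Ioo 0 1)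
    (hfix : mβ = tanh (β * mβ)) : StrictMonoOn (meanFieldFreeEnergy β) (Icc mβ 1) := by
  refine strictMonoOn_of_deriv_pos (convex_Icc mβ 1)
    (continuous_meanFieldFreeEnergy β).continuousOn fun x hx ↦ ?_
  rw [interior_Icc] at hx
  have hx₁ : x ∈ Ioo 0 1 := ⟨hmem.1.trans hx.1, hx.2⟩
  rw [(hasDerivAt_meanFieldFreeEnergy β ⟨by linarith [hx₁.1], hx₁.2⟩).deriv, sub_pos,
    lt_div_iff₀ hβ, ← lt_div_iff₀' hx₁.1]
  calc β = artanh mβ / mβ := (artanh_div_self_of_eq_tanh_mul hmem.1.ne' hfix).symm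
    _ < artanh x / x := strictMonoOn_artanh_div_self hmem hx₁ hx.1

theorem meanFieldFreeEnergy_lt_of_abs_ne (hβ : 0 < β) (hmem : mβ ∈ Ioo 0 1)
    (hfix : mβ = tanh (β * mβ)) {m : ℝ} (hm : m ∈ Icc (-1) 1) (hne : |m| ≠ mβ) :
    meanFieldFreeEnergy β mβ < meanFieldFreeEnergy β m := by
  rw [← meanFieldFreeEnergy_abs β m]
  exact (meanFieldFreeEnergy_strictAntiOn hβ hmem hfix).apply_lt_of_strictMonoOn
    (meanFieldFreeEnergy_strictMonoOn hβ hmem hfix) hmem.1.le hmem.2.le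
    ⟨abs_nonneg m, abs_le.2 hm⟩ hne

end TwoWells

/-- For `β > 1` and `m_β ∈ (0,1)` the unique positive solution of
`m = tanh(β m)`, the free energy `f_β` is even on `[−1,1]` and attains its minimum
over `[−1,1]` exactly at `m_β` and `−m_β`. -/
theorem mean_field_free_energy_two_wells
    (β : ℝ) (hβ : 1 < β) (mβ : ℝ) (hmem : mβ ∈ Set.Ioo (0 : ℝ) 1)
    (hfix : mβ = Real.tanh (β * mβ)) :
    (∀ m ∈ Set.Icc (-1 : ℝ) 1, meanFieldFreeEnergy β (-m) = meanFieldFreeEnergy β m) ∧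
    (∀ m ∈ Set.Icc (-1 : ℝ) 1, meanFieldFreeEnergy β mβ ≤ meanFieldFreeEnergy β m) ∧
    (∀ m ∈ Set.Icc (-1 : ℝ) 1,
      (meanFieldFreeEnergy β m = meanFieldFreeEnergy β mβ ↔ m = mβ ∨ m = -mβ)) := by
  have hβ₀ : 0 < β := zero_lt_one.trans hβ
  have hmin {m : ℝ} (hm : m ∈ Icc (-1 : ℝ) 1) (hne : |m| ≠ mβ) :=
    meanFieldFreeEnergy_lt_of_abs_ne hβ₀ hmem hfix hm hne
  refine ⟨fun m _ ↦ meanFieldFreeEnergy_neg β m, fun m hm ↦ ?_, fun m hm ↦ ?_⟩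
  · by_cases h : |m| = mβ
    · rw [← meanFieldFreeEnergy_abs β m, h]
    · exact (hmin hm h).le
  · rw [← abs_eq hmem.1.le]
    refine ⟨fun heq ↦ ?_, fun h ↦ by rw [← meanFieldFreeEnergy_abs β m, h]⟩
    by_contra h
    exact (hmin hm h).ne' heq
end
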